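/- arXiv:1411.5716 — 2 statements merged into one kernel-verified Lean document; each statement's English description precedes it below -/
import Mathlib

section
/- For a closed 2-form ω on a manifold M and the first-order Chen integral (∫ᵗ_Chen ω)(v)(γ) = ∫₀ᵗ ω(γ̇(τ), v(τ)) dτ, the exterior derivative formula specializes to d(∫ᵗ_Chen ω) = ev_t* ω − ev_0* ω on path space, i.e. the general formula d∫ᵗ_Chen α = ev_t*α − ev_0*α − ∫ᵗ_Chen dα holds with the last term vanishing when dω = 0. -/
/-- The truncated first-order Chen integral of a constant (hence closed) 2-form `ω`
on the vector space `V`, viewed as a 1-form on path space. -/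
noncomputable def chenOneForm {V : Type*} [NormedAddCommGroup V] [NormedSpace ℝ V]
    (ω : V →ₗ[ℝ] V →ₗ[ℝ] ℝ) (t : ℝ) (γ v : ℝ → V) : ℝ :=
  ∫ τ in (0:ℝ)..t, ω (deriv γ τ) (v τ)

theorem chen_integral_exterior_derivative {V : Type*} [NormedAddCommGroup V]
    [NormedSpace ℝ V] [FiniteDimensional ℝ V]
    (ω : V →ₗ[ℝ] V →ₗ[ℝ] ℝ)
    (hanti : ∀ x y, ω x y = - ω y x)
    (γ v₁ v₂ : ℝ → V)
    (hγ : ContDiff ℝ (⊤ : ℕ∞) γ) (hv₁ : ContDiff ℝ (⊤ : ℕ∞) v₁) (hv₂ : ContDiff ℝ (⊤ : ℕ∞) v₂)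
    (t : ℝ) (ht : t ∈ Set.Icc (0:ℝ) 1) :
    deriv (fun s : ℝ => chenOneForm ω t (fun u => γ u + s • v₁ u) v₂) 0
      - deriv (fun s : ℝ => chenOneForm ω t (fun u => γ u + s • v₂ u) v₁) 0
    = ω (v₁ t) (v₂ t) - ω (v₁ 0) (v₂ 0) := by
  -- Continuous bilinear version of ω
  set L : V →L[ℝ] V →L[ℝ] ℝ :=
    LinearMap.toContinuousLinearMap
      ((LinearMap.toContinuousLinearMap :
          (V →ₗ[ℝ] ℝ) ≃ₗ[ℝ] (V →L[ℝ] ℝ)).toLinearMap.comp ω) with hLdef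
  have hL : ∀ x y, L x y = ω x y := fun x y => rfl
  have hcont : ∀ f g : ℝ → V, Continuous f → Continuous g →
      Continuous fun τ => ω (f τ) (g τ) := by
    intro f g hf hg
    have : Continuous fun τ => L (f τ) (g τ) :=
      (L.continuous.comp hf).clm_apply hg
    simpa [hL] using this
  -- The s-derivative of the perturbed Chen integral
  have key : ∀ w z : ℝ → V, ContDiff ℝ (⊤ : ℕ∞) w → ContDiff ℝ (⊤ : ℕ∞) z →
      deriv (fun s : ℝ => chenOneForm ω t (fun u => γ u + s • w u) z) 0
        = ∫ τ in (0:ℝ)..t, ω (deriv w τ) (z τ) := by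
    intro w z hw hz
    have hγd := hγ.differentiable (by simp)
    have hwd := hw.differentiable (by simp)
    have hint1 : IntervalIntegrable (fun τ => ω (deriv γ τ) (z τ))
        MeasureTheory.volume 0 t :=
      (hcont _ _ (hγ.continuous_deriv (by simp)) hz.continuous).intervalIntegrable 0 t
    have hint2 : IntervalIntegrable (fun τ => ω (deriv w τ) (z τ))
        MeasureTheory.volume 0 t :=
      (hcont _ _ (hw.continuous_deriv (by simp)) hz.continuous).intervalIntegrable 0 t
    have hexp : ∀ s : ℝ, chenOneForm ω t (fun u => γ u + s • w u) z
        = (∫ τ in (0:ℝ)..t, ω (deriv γ τ) (z τ))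
          + s * ∫ τ in (0:ℝ)..t, ω (deriv w τ) (z τ) := by
      intro s
      unfold chenOneForm
      have hder : ∀ τ, deriv (fun u => γ u + s • w u) τ
          = deriv γ τ + s • deriv w τ := by
        intro τ
        rw [deriv_fun_add (g := fun u => s • w u) (hγd.differentiableAt) ((hwd.differentiableAt).const_smul s),
          deriv_fun_const_smul s hwd.differentiableAt]
      simp only [hder, map_add, map_smul, LinearMap.add_apply, LinearMap.smul_apply,
        smul_eq_mul]
      rw [intervalIntegral.integral_add hint1 (hint2.const_mul s),
        intervalIntegral.integral_const_mul]
    rw [funext hexp]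
    have : HasDerivAt (fun s : ℝ =>
        (∫ τ in (0:ℝ)..t, ω (deriv γ τ) (z τ))
          + s * ∫ τ in (0:ℝ)..t, ω (deriv w τ) (z τ))
        (∫ τ in (0:ℝ)..t, ω (deriv w τ) (z τ)) 0 := by
      simpa using (((hasDerivAt_id (0:ℝ)).mul_const
        (∫ τ in (0:ℝ)..t, ω (deriv w τ) (z τ))).const_add
        (∫ τ in (0:ℝ)..t, ω (deriv γ τ) (z τ)))
    exact this.deriv
  rw [key v₁ v₂ hv₁ hv₂, key v₂ v₁ hv₂ hv₁]
  have hrw : (fun τ => ω (deriv v₂ τ) (v₁ τ))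
      = fun τ => - ω (v₁ τ) (deriv v₂ τ) := by
    funext τ; rw [hanti]
  have hint1 : IntervalIntegrable (fun τ => ω (deriv v₁ τ) (v₂ τ))
      MeasureTheory.volume 0 t :=
    (hcont _ _ (hv₁.continuous_deriv (by simp)) hv₂.continuous).intervalIntegrable 0 t
  have hint2 : IntervalIntegrable (fun τ => ω (v₁ τ) (deriv v₂ τ))
      MeasureTheory.volume 0 t :=
    (hcont _ _ hv₁.continuous (hv₂.continuous_deriv (by simp))).intervalIntegrable 0 t
  rw [hrw, intervalIntegral.integral_neg, sub_neg_eq_add,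
    ← intervalIntegral.integral_add hint1 hint2]
  -- Fundamental theorem of calculus for τ ↦ ω (v₁ τ) (v₂ τ)
  have hFTC : ∀ τ ∈ Set.uIcc (0:ℝ) t,
      HasDerivAt (fun u => ω (v₁ u) (v₂ u))
        (ω (deriv v₁ τ) (v₂ τ) + ω (v₁ τ) (deriv v₂ τ)) τ := by
    intro τ _
    have h1 : HasDerivAt v₁ (deriv v₁ τ) τ := (hv₁.differentiable (by simp) τ).hasDerivAt
    have h2 : HasDerivAt v₂ (deriv v₂ τ) τ := (hv₂.differentiable (by simp) τ).hasDerivAt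
    have hc : HasDerivAt (fun u => L (v₁ u)) (L (deriv v₁ τ)) τ :=
      L.hasFDerivAt.comp_hasDerivAt τ h1
    have := hc.clm_apply h2
    simpa [hL] using this
  rw [intervalIntegral.integral_eq_sub_of_hasDerivAt hFTC
    (hint1.add hint2)]
end

section
/- Consequently, for a loop Γ on path space contained in a single domain of the symplectic potential θ, the line integral of the path-space 1-form λ along Γ satisfies ∫_Γ λ = −∮_{Γ⁰} θ + ∫₀¹ (∮_{Γᵗ} θ) dt, where λ(v)(γ) = ∫₀¹ ∫₀ᵗ ω(γ̇(τ), v(τ)) dτ dt and ω = dθ. -/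
open MeasureTheory Set
open scoped ContDiff

private lemma my_swap {f : ℝ → ℝ → ℝ} (hf : Continuous (Function.uncurry f)) {a b c d : ℝ}
    (hab : a ≤ b) (hcd : c ≤ d) :
    ∫ x in a..b, ∫ y in c..d, f x y = ∫ y in c..d, ∫ x in a..b, f x y := by
  rw [intervalIntegral.integral_of_le hab, intervalIntegral.integral_of_le hcd]
  simp_rw [intervalIntegral.integral_of_le hcd, intervalIntegral.integral_of_le hab]
  apply MeasureTheory.integral_integral_swap
  rw [Measure.prod_restrict, ← Measure.volume_eq_prod]
  exact (hf.continuousOn.integrableOn_compact (isCompact_Icc.prod isCompact_Icc)).mono_set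
    (Set.prod_mono Set.Ioc_subset_Icc_self Set.Ioc_subset_Icc_self)

theorem lambda_holonomy_single_potential_domain {V : Type*} [NormedAddCommGroup V]
    [NormedSpace ℝ V] [FiniteDimensional ℝ V]
    (θ : V → V →L[ℝ] ℝ) (hθ : ContDiff ℝ (⊤ : ℕ∞) θ)
    (Γ : ℝ → ℝ → V) (hΓ : ContDiff ℝ (⊤ : ℕ∞) (Function.uncurry Γ))
    (hloop : ∀ τ : ℝ, Γ 0 τ = Γ 1 τ) :
    (∫ s in (0:ℝ)..1, ∫ t in (0:ℝ)..1, ∫ τ in (0:ℝ)..t,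
        (fderiv ℝ θ (Γ s τ) (deriv (Γ s) τ) (deriv (fun u => Γ u τ) s)
          - fderiv ℝ θ (Γ s τ) (deriv (fun u => Γ u τ) s) (deriv (Γ s) τ)))
      = - (∫ s in (0:ℝ)..1, θ (Γ s 0) (deriv (fun u => Γ u 0) s))
        + ∫ t in (0:ℝ)..1, ∫ s in (0:ℝ)..1, θ (Γ s t) (deriv (fun u => Γ u t) s) := by
  have hΦ : ContDiff ℝ ∞ (Function.uncurry Γ) := hΓ.of_le (by simp)
  have hθ' : ContDiff ℝ ∞ θ := hθ.of_le (by simp)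
  set Φ : ℝ × ℝ → V := Function.uncurry Γ with hΦdef
  set D : ℝ × ℝ → (ℝ × ℝ) →L[ℝ] V := fderiv ℝ Φ with hDdef
  have hD : ContDiff ℝ ∞ D := hΦ.fderiv_right (by norm_num)
  have hdΦ : ∀ p : ℝ × ℝ, HasFDerivAt Φ (D p) p :=
    fun p => (hΦ.differentiable (by norm_num) p).hasFDerivAt
  -- partial derivatives
  have hd1 : ∀ s t : ℝ, HasDerivAt (fun u => Γ u t) (D (s, t) (1, 0)) s := by
    intro s t
    have h2 : HasDerivAt (fun u : ℝ => (u, t)) ((1 : ℝ), (0 : ℝ)) s :=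
      (hasDerivAt_id s).prodMk (hasDerivAt_const s t)
    exact (hdΦ (s, t)).comp_hasDerivAt s h2
  have hd2 : ∀ s t : ℝ, HasDerivAt (Γ s) (D (s, t) (0, 1)) t := by
    intro s t
    have h2 : HasDerivAt (fun τ : ℝ => (s, τ)) ((0 : ℝ), (1 : ℝ)) t :=
      (hasDerivAt_const t s).prodMk (hasDerivAt_id t)
    exact (hdΦ (s, t)).comp_hasDerivAt t h2
  have hder1 : ∀ s t : ℝ, deriv (fun u => Γ u t) s = D (s, t) (1, 0) := fun s t => (hd1 s t).deriv
  have hder2 : ∀ s t : ℝ, deriv (Γ s) t = D (s, t) (0, 1) := fun s t => (hd2 s t).deriv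
  -- the two auxiliary functions
  set F : ℝ × ℝ → ℝ := fun p => θ (Φ p) (D p (1, 0)) with hFdef
  set G : ℝ × ℝ → ℝ := fun p => θ (Φ p) (D p (0, 1)) with hGdef
  have hΘ : ContDiff ℝ ∞ (fun p : ℝ × ℝ => θ (Φ p)) := hθ'.comp hΦ
  have hD1 : ContDiff ℝ ∞ (fun p : ℝ × ℝ => D p (1, 0)) := hD.clm_apply contDiff_const
  have hD2 : ContDiff ℝ ∞ (fun p : ℝ × ℝ => D p (0, 1)) := hD.clm_apply contDiff_const
  have hF : ContDiff ℝ ∞ F := hΘ.clm_apply hD1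
  have hG : ContDiff ℝ ∞ G := hΘ.clm_apply hD2
  -- symmetry of second derivative
  have hsym : ∀ p : ℝ × ℝ, ∀ v w, fderiv ℝ D p v w = fderiv ℝ D p w v :=
    fun p => second_derivative_symmetric (fun y => hdΦ y)
      ((hD.differentiable (by norm_num) p).hasFDerivAt)
  -- fderiv of θ ∘ Φ
  have hfΘ : ∀ p : ℝ × ℝ, fderiv ℝ (fun q : ℝ × ℝ => θ (Φ q)) p
      = (fderiv ℝ θ (Φ p)).comp (D p) := by
    intro p
    exact fderiv_comp p (hθ'.differentiable (by norm_num) (Φ p))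
      (hΦ.differentiable (by norm_num) p)
  -- fderiv of the evaluated-derivative maps
  have hfD : ∀ (c : ℝ × ℝ) (p v : ℝ × ℝ),
      fderiv ℝ (fun q : ℝ × ℝ => D q c) p v = fderiv ℝ D p v c := by
    intro c p v
    rw [fderiv_clm_apply (hD.differentiable (by norm_num) p) (differentiableAt_const c)]
    simp
  -- key pointwise identity
  have key : ∀ p : ℝ × ℝ,
      fderiv ℝ θ (Φ p) (D p (0, 1)) (D p (1, 0)) - fderiv ℝ θ (Φ p) (D p (1, 0)) (D p (0, 1))
        = fderiv ℝ F p (0, 1) - fderiv ℝ G p (1, 0) := by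
    intro p
    have hFf : fderiv ℝ F p (0, 1)
        = fderiv ℝ θ (Φ p) (D p (0, 1)) (D p (1, 0)) + θ (Φ p) (fderiv ℝ D p (0, 1) (1, 0)) := by
      rw [hFdef]
      rw [fderiv_clm_apply (hΘ.differentiable (by norm_num) p)
        (hD1.differentiable (by norm_num) p)]
      simp only [ContinuousLinearMap.add_apply, ContinuousLinearMap.coe_comp',
        ContinuousLinearMap.flip_apply, Function.comp_apply]
      rw [hfΘ p, hfD (1, 0) p (0, 1), ContinuousLinearMap.comp_apply]
      ring
    have hGf : fderiv ℝ G p (1, 0)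
        = fderiv ℝ θ (Φ p) (D p (1, 0)) (D p (0, 1)) + θ (Φ p) (fderiv ℝ D p (1, 0) (0, 1)) := by
      rw [hGdef]
      rw [fderiv_clm_apply (hΘ.differentiable (by norm_num) p)
        (hD2.differentiable (by norm_num) p)]
      simp only [ContinuousLinearMap.add_apply, ContinuousLinearMap.coe_comp',
        ContinuousLinearMap.flip_apply, Function.comp_apply]
      rw [hfΘ p, hfD (0, 1) p (1, 0), ContinuousLinearMap.comp_apply]
      ring
    rw [hFf, hGf, hsym p (0, 1) (1, 0)]
    ring
  -- derivatives of F and G along coordinate lines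
  have hFt : ∀ s t : ℝ, HasDerivAt (fun t' => F (s, t')) (fderiv ℝ F (s, t) (0, 1)) t := by
    intro s t
    have h2 : HasDerivAt (fun τ : ℝ => (s, τ)) ((0 : ℝ), (1 : ℝ)) t :=
      (hasDerivAt_const t s).prodMk (hasDerivAt_id t)
    exact ((hF.differentiable (by norm_num) (s, t)).hasFDerivAt).comp_hasDerivAt t h2
  have hGs : ∀ s t : ℝ, HasDerivAt (fun s' => G (s', t)) (fderiv ℝ G (s, t) (1, 0)) s := by
    intro s t
    have h2 : HasDerivAt (fun u : ℝ => (u, t)) ((1 : ℝ), (0 : ℝ)) s :=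
      (hasDerivAt_id s).prodMk (hasDerivAt_const s t)
    exact ((hG.differentiable (by norm_num) (s, t)).hasFDerivAt).comp_hasDerivAt s h2
  set g : ℝ × ℝ → ℝ := fun p => fderiv ℝ G p (1, 0) with hgdef
  have cg : Continuous g := ((hG.fderiv_right (m := ∞) (by norm_num)).clm_apply contDiff_const).continuous
  have cf2 : Continuous (fun p : ℝ × ℝ => fderiv ℝ F p (0, 1)) :=
    ((hF.fderiv_right (m := ∞) (by norm_num)).clm_apply contDiff_const).continuous
  -- FTC in the t-direction
  have inner : ∀ s t : ℝ,
      (∫ τ in (0:ℝ)..t, (fderiv ℝ F (s, τ) (0, 1) - g (s, τ)))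
        = F (s, t) - F (s, 0) - ∫ τ in (0:ℝ)..t, g (s, τ) := by
    intro s t
    have i1 : IntervalIntegrable (fun τ => fderiv ℝ F (s, τ) (0, 1)) volume 0 t :=
      (cf2.comp (continuous_const.prodMk continuous_id)).intervalIntegrable 0 t
    have i2 : IntervalIntegrable (fun τ => g (s, τ)) volume 0 t :=
      (cg.comp (continuous_const.prodMk continuous_id)).intervalIntegrable 0 t
    rw [intervalIntegral.integral_sub i1 i2]
    congr 1
    exact intervalIntegral.integral_eq_sub_of_hasDerivAt (fun τ _ => hFt s τ) i1
  -- splitting the t-integral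
  have cFs : ∀ s : ℝ, Continuous fun t => F (s, t) :=
    fun s => hF.continuous.comp (continuous_const.prodMk continuous_id)
  have cgs : ∀ s : ℝ, Continuous fun t : ℝ => ∫ τ in (0:ℝ)..t, g (s, τ) := by
    intro s
    exact intervalIntegral.continuous_primitive
      (fun a b => ((cg.comp (continuous_const.prodMk continuous_id))).intervalIntegrable a b) 0
  have main2 : ∀ s : ℝ,
      (∫ t in (0:ℝ)..1, (F (s, t) - F (s, 0) - ∫ τ in (0:ℝ)..t, g (s, τ)))
        = (∫ t in (0:ℝ)..1, F (s, t)) - F (s, 0)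
          - ∫ t in (0:ℝ)..1, ∫ τ in (0:ℝ)..t, g (s, τ) := by
    intro s
    rw [intervalIntegral.integral_sub (f := fun t => F (s, t) - F (s, 0)) (((cFs s).sub continuous_const).intervalIntegrable 0 1)
        ((cgs s).intervalIntegrable 0 1),
      intervalIntegral.integral_sub ((cFs s).intervalIntegrable 0 1)
        (continuous_const.intervalIntegrable 0 1)]
    simp
  -- continuity of the three s-dependent pieces
  have cA : Continuous fun s : ℝ => ∫ t in (0:ℝ)..1, F (s, t) :=
    intervalIntegral.continuous_parametric_intervalIntegral_of_continuous'
      (f := fun s t => F (s, t)) hF.continuous 0 1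
  have cB : Continuous fun s : ℝ => F (s, 0) :=
    hF.continuous.comp (continuous_id.prodMk continuous_const)
  have cC : Continuous fun s : ℝ => ∫ t in (0:ℝ)..1, ∫ τ in (0:ℝ)..t, g (s, τ) := by
    apply intervalIntegral.continuous_parametric_intervalIntegral_of_continuous'
      (f := fun s t => ∫ τ in (0:ℝ)..t, g (s, τ)) ?_ 0 1
    exact intervalIntegral.continuous_parametric_primitive_of_continuous
      (f := fun s τ => g (s, τ)) cg
  -- the loop condition kills the G-term
  have hΓ01 : Γ 0 = Γ 1 := funext hloop
  have hGloop : ∀ τ : ℝ, G (1, τ) = G (0, τ) := by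
    intro τ
    show θ (Φ (1, τ)) (D (1, τ) (0, 1)) = θ (Φ (0, τ)) (D (0, τ) (0, 1))
    rw [← hder2 1 τ, ← hder2 0 τ]
    show θ (Γ 1 τ) (deriv (Γ 1) τ) = θ (Γ 0 τ) (deriv (Γ 0) τ)
    rw [hΓ01]
  have ftcG : ∀ τ : ℝ, (∫ s in (0:ℝ)..1, g (s, τ)) = G (1, τ) - G (0, τ) := fun τ =>
    intervalIntegral.integral_eq_sub_of_hasDerivAt (fun s _ => hGs s τ)
      ((cg.comp (continuous_id.prodMk continuous_const)).intervalIntegrable 0 1)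
  have hC0 : (∫ s in (0:ℝ)..1, ∫ t in (0:ℝ)..1, ∫ τ in (0:ℝ)..t, g (s, τ)) = 0 := by
    rw [my_swap (f := fun s t => ∫ τ in (0:ℝ)..t, g (s, τ))
      (intervalIntegral.continuous_parametric_primitive_of_continuous (f := fun s τ => g (s, τ)) cg)
      zero_le_one zero_le_one]
    have hzero : Set.EqOn (fun t => ∫ s in (0:ℝ)..1, ∫ τ in (0:ℝ)..t, g (s, τ))
        (fun _ => (0:ℝ)) (Set.uIcc (0:ℝ) 1) := by
      intro t ht
      rw [Set.uIcc_of_le zero_le_one] at ht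
      show (∫ s in (0:ℝ)..1, ∫ τ in (0:ℝ)..t, g (s, τ)) = 0
      rw [my_swap (f := fun s τ => g (s, τ)) cg zero_le_one ht.1]
      have h2 : Set.EqOn (fun τ => ∫ s in (0:ℝ)..1, g (s, τ)) (fun _ => (0:ℝ))
          (Set.uIcc (0:ℝ) t) := by
        intro τ _
        show (∫ s in (0:ℝ)..1, g (s, τ)) = 0
        rw [ftcG τ, hGloop τ, sub_self]
      rw [intervalIntegral.integral_congr h2]
      simp
    rw [intervalIntegral.integral_congr hzero]
    simp
  -- reassembling
  have hA : (∫ s in (0:ℝ)..1, ∫ t in (0:ℝ)..1, F (s, t))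
      = ∫ t in (0:ℝ)..1, ∫ s in (0:ℝ)..1, θ (Γ s t) (deriv (fun u => Γ u t) s) := by
    rw [my_swap (f := fun s t => F (s, t)) hF.continuous zero_le_one zero_le_one]
    apply intervalIntegral.integral_congr
    intro t _
    apply intervalIntegral.integral_congr
    intro s _
    show F (s, t) = θ (Γ s t) (deriv (fun u => Γ u t) s)
    rw [hder1]
    rfl
  have hB : (∫ s in (0:ℝ)..1, F (s, 0))
      = ∫ s in (0:ℝ)..1, θ (Γ s 0) (deriv (fun u => Γ u 0) s) := by
    apply intervalIntegral.integral_congr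
    intro s _
    show F (s, 0) = θ (Γ s 0) (deriv (fun u => Γ u 0) s)
    rw [hder1]
    rfl
  calc (∫ s in (0:ℝ)..1, ∫ t in (0:ℝ)..1, ∫ τ in (0:ℝ)..t,
        (fderiv ℝ θ (Γ s τ) (deriv (Γ s) τ) (deriv (fun u => Γ u τ) s)
          - fderiv ℝ θ (Γ s τ) (deriv (fun u => Γ u τ) s) (deriv (Γ s) τ)))
      = ∫ s in (0:ℝ)..1, ((∫ t in (0:ℝ)..1, F (s, t)) - F (s, 0)
          - ∫ t in (0:ℝ)..1, ∫ τ in (0:ℝ)..t, g (s, τ)) := by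
        apply intervalIntegral.integral_congr
        intro s _
        dsimp only
        rw [← main2 s]
        apply intervalIntegral.integral_congr
        intro t _
        dsimp only
        rw [← inner s t]
        apply intervalIntegral.integral_congr
        intro τ _
        show (fderiv ℝ θ (Γ s τ) (deriv (Γ s) τ) (deriv (fun u => Γ u τ) s)
          - fderiv ℝ θ (Γ s τ) (deriv (fun u => Γ u τ) s) (deriv (Γ s) τ))
          = fderiv ℝ F (s, τ) (0, 1) - g (s, τ)
        rw [hder1, hder2]
        exact key (s, τ)
    _ = (∫ s in (0:ℝ)..1, ∫ t in (0:ℝ)..1, F (s, t)) - (∫ s in (0:ℝ)..1, F (s, 0))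
          - ∫ s in (0:ℝ)..1, ∫ t in (0:ℝ)..1, ∫ τ in (0:ℝ)..t, g (s, τ) := by
        rw [intervalIntegral.integral_sub (f := fun s => (∫ t in (0:ℝ)..1, F (s, t)) - F (s, 0)) ((cA.sub cB).intervalIntegrable 0 1)
            (cC.intervalIntegrable 0 1),
          intervalIntegral.integral_sub (cA.intervalIntegrable 0 1) (cB.intervalIntegrable 0 1)]
    _ = - (∫ s in (0:ℝ)..1, θ (Γ s 0) (deriv (fun u => Γ u 0) s))
        + ∫ t in (0:ℝ)..1, ∫ s in (0:ℝ)..1, θ (Γ s t) (deriv (fun u => Γ u t) s) := by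
        rw [hA, hB, hC0]
        ring
end
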